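/- arXiv:2302.00888 — 2 statements merged into one kernel-verified Lean document; each statement's English description precedes it below -/
import Mathlib

section
/- Let β = 1 and m(r) = √(r² + r⁴ + r⁶) for r > 0. Then there exist constants c, C > 0 such that for all r > 0: c(1 + r)² ≤ m′(r) ≤ C(1 + r)², and c · r³(1 + r)^{−2} ≤ m″(r) ≤ C · r. -/
open Real

lemma hasDerivAt_m (r : ℝ) (hr : 0 < r) :
    HasDerivAt (fun s : ℝ => Real.sqrt (s ^ 2 + s ^ 4 + s ^ 6))
      ((2*r + 4*r^3 + 6*r^5) / (2 * Real.sqrt (r ^ 2 + r ^ 4 + r ^ 6))) r := by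
  have hPpos : (0:ℝ) < r ^ 2 + r ^ 4 + r ^ 6 := by positivity
  have hp : HasDerivAt (fun s : ℝ => s ^ 2 + s ^ 4 + s ^ 6) (2*r + 4*r^3 + 6*r^5) r := by
    have h := ((hasDerivAt_pow 2 r).add (hasDerivAt_pow 4 r)).add (hasDerivAt_pow 6 r)
    refine h.congr_deriv ?_
    push_cast
    ring
  exact hp.sqrt (ne_of_gt hPpos)

lemma deriv2_m (r : ℝ) (hr : 0 < r) :
    deriv (deriv (fun s : ℝ => Real.sqrt (s ^ 2 + s ^ 4 + s ^ 6))) r =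
      3 * r^4 * (1 + 4*r^2 + 3*r^4 + 2*r^6) / (Real.sqrt (r ^ 2 + r ^ 4 + r ^ 6))^3 := by
  have hPpos : (0:ℝ) < r ^ 2 + r ^ 4 + r ^ 6 := by positivity
  set S := Real.sqrt (r ^ 2 + r ^ 4 + r ^ 6) with hSdef
  have hSpos : 0 < S := Real.sqrt_pos.mpr hPpos
  have hS2 : S ^ 2 = r ^ 2 + r ^ 4 + r ^ 6 := Real.sq_sqrt hPpos.le
  have heq : deriv (fun s : ℝ => Real.sqrt (s ^ 2 + s ^ 4 + s ^ 6)) =ᶠ[nhds r]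
      (fun s => (2*s + 4*s^3 + 6*s^5) / (2 * Real.sqrt (s ^ 2 + s ^ 4 + s ^ 6))) := by
    filter_upwards [Ioi_mem_nhds hr] with s hs
    exact (hasDerivAt_m s hs).deriv
  rw [heq.deriv_eq]
  have hN : HasDerivAt (fun s : ℝ => 2*s + 4*s^3 + 6*s^5) (2 + 12*r^2 + 30*r^4) r := by
    have h := (((hasDerivAt_id r).const_mul 2).add ((hasDerivAt_pow 3 r).const_mul 4)).add
      ((hasDerivAt_pow 5 r).const_mul 6)
    refine h.congr_deriv ?_
    push_cast
    ring
  have hp : HasDerivAt (fun s : ℝ => s ^ 2 + s ^ 4 + s ^ 6) (2*r + 4*r^3 + 6*r^5) r := by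
    have h := ((hasDerivAt_pow 2 r).add (hasDerivAt_pow 4 r)).add (hasDerivAt_pow 6 r)
    refine h.congr_deriv ?_
    push_cast
    ring
  have hD : HasDerivAt (fun s : ℝ => 2 * Real.sqrt (s ^ 2 + s ^ 4 + s ^ 6))
      (2 * ((2*r + 4*r^3 + 6*r^5) / (2 * S))) r := (hp.sqrt (ne_of_gt hPpos)).const_mul 2
  have hg := hN.div hD (by positivity)
  rw [← hSdef] at hg
  erw [hg.deriv]
  field_simp
  linear_combination (4+24*r^2+60*r^4) * hS2

/-- Let `β = 1` and `m(r) = √(r² + r⁴ + r⁶)` for `r > 0`. Then there exist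
constants `c, C > 0` such that for all `r > 0`:
`c(1 + r)² ≤ m′(r) ≤ C(1 + r)²` and `c · r³(1 + r)⁻² ≤ m″(r) ≤ C · r`. -/
theorem phase_derivative_bounds_beta_one :
    ∃ c > (0 : ℝ), ∃ C > (0 : ℝ), ∀ r : ℝ, 0 < r →
      (c * (1 + r) ^ 2 ≤ deriv (fun s : ℝ => Real.sqrt (s ^ 2 + s ^ 4 + s ^ 6)) r ∧
        deriv (fun s : ℝ => Real.sqrt (s ^ 2 + s ^ 4 + s ^ 6)) r ≤ C * (1 + r) ^ 2) ∧
      (c * (r ^ 3 * ((1 + r) ^ 2)⁻¹) ≤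
          deriv (deriv (fun s : ℝ => Real.sqrt (s ^ 2 + s ^ 4 + s ^ 6))) r ∧
        deriv (deriv (fun s : ℝ => Real.sqrt (s ^ 2 + s ^ 4 + s ^ 6))) r ≤ C * r) := by
  refine ⟨1/2, by norm_num, 48, by norm_num, fun r hr => ?_⟩
  have hPpos : (0:ℝ) < r ^ 2 + r ^ 4 + r ^ 6 := by positivity
  set S := Real.sqrt (r ^ 2 + r ^ 4 + r ^ 6) with hSdef
  have hSpos : 0 < S := Real.sqrt_pos.mpr hPpos
  have hSu : S ≤ r * (1 + r^2) := by
    rw [show r * (1 + r^2) = Real.sqrt ((r * (1 + r^2))^2) from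
      (Real.sqrt_sq (by positivity)).symm]
    exact Real.sqrt_le_sqrt (by nlinarith)
  have hSl : r * (1 + r^2) / 2 ≤ S := by
    rw [show r * (1 + r^2) / 2 = Real.sqrt ((r * (1 + r^2) / 2)^2) from
      (Real.sqrt_sq (by positivity)).symm]
    exact Real.sqrt_le_sqrt (by nlinarith)
  have hd1 : deriv (fun s : ℝ => Real.sqrt (s ^ 2 + s ^ 4 + s ^ 6)) r
      = (2*r + 4*r^3 + 6*r^5) / (2 * S) := (hasDerivAt_m r hr).deriv
  have hd2 := deriv2_m r hr
  constructor
  · rw [hd1]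
    constructor
    · rw [le_div_iff₀ (by positivity)]
      nlinarith [mul_le_mul_of_nonneg_left hSu (sq_nonneg (1+r)),
        mul_nonneg hr.le (sq_nonneg (1-r)),
        mul_nonneg (pow_nonneg hr.le 3) (sq_nonneg (1-r)), pow_nonneg hr.le 5]
    · rw [div_le_iff₀ (by positivity)]
      nlinarith [mul_le_mul_of_nonneg_left hSl (by positivity : (0:ℝ) ≤ 96*(1+r)^2),
        pow_nonneg hr.le 3, pow_nonneg hr.le 5, mul_nonneg hr.le (sq_nonneg r), hr.le]
  · rw [hd2]
    have hS3u : S^3 ≤ (r * (1 + r^2))^3 := by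
      apply pow_le_pow_left₀ hSpos.le hSu
    have hS3l : (r * (1 + r^2) / 2)^3 ≤ S^3 := by
      apply pow_le_pow_left₀ (by positivity) hSl
    constructor
    · have h1 : r^3 * ((1+r)^2)⁻¹ ≤ r := by
        rw [mul_inv_le_iff₀ (by positivity)]
        nlinarith
      have h2 : r/2 ≤ 3 * r^4 * (1 + 4*r^2 + 3*r^4 + 2*r^6) / S^3 := by
        rw [le_div_iff₀ (by positivity)]
        nlinarith [mul_le_mul_of_nonneg_left hS3u (by positivity : (0:ℝ) ≤ r/2),
          pow_nonneg hr.le 4, pow_nonneg hr.le 6, pow_nonneg hr.le 8, pow_nonneg hr.le 10]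
      linarith
    · rw [div_le_iff₀ (by positivity)]
      nlinarith [mul_le_mul_of_nonneg_left hS3l (by positivity : (0:ℝ) ≤ 48*r),
        pow_nonneg hr.le 4, pow_nonneg hr.le 6, pow_nonneg hr.le 8, pow_nonneg hr.le 10]
end

section
/- Let β = −1, m(r) = √(r² − r⁴ + r⁶), and for λ > 0 set m_λ(r) = m(λr). There exist λ₀ > 1 and, for every integer j ≥ 0, a constant C_j > 0 such that for all λ ≥ λ₀ and all r ∈ [1/2, 2], the function r ↦ 1/m_λ′(r) is well defined (m_λ′(r) ≠ 0) and |∂_r^j (1/m_λ′(r))| ≤ C_j λ^{−3}. -/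
open Set

noncomputable def phiB : ℝ → ℝ := fun u => Real.sqrt (u ^ 2 - u + 1) / (u ^ 2 - 2 * u + 3)

lemma phiB_contDiff : ContDiff ℝ (⊤ : ℕ∞) phiB := by
  apply ContDiff.div
  · rw [contDiff_iff_contDiffAt]
    intro u
    refine ContDiffAt.sqrt (by fun_prop) ?_
    nlinarith [sq_nonneg (2 * u - 1)]
  · fun_prop
  · intro u; nlinarith [sq_nonneg (u - 1)]

def UB : Set (ℝ × ℝ) := {p | p.2 ≠ 0}

lemma UB_open : IsOpen UB := isOpen_compl_singleton.preimage continuous_snd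

noncomputable def gB : ℝ × ℝ → ℝ :=
  fun p => (p.2 ^ 2)⁻¹ * phiB (p.1 ^ 2 * (p.2 ^ 2)⁻¹)

lemma gB_contDiffOn : ContDiffOn ℝ (⊤ : ℕ∞) gB UB := by
  have h2 : ContDiffOn ℝ (⊤ : ℕ∞) (fun p : ℝ × ℝ => ((p.2 : ℝ) ^ 2)⁻¹) UB :=
    (ContDiff.contDiffOn (by fun_prop)).inv (fun p hp => pow_ne_zero 2 hp)
  exact h2.mul (phiB_contDiff.comp_contDiffOn
    ((ContDiff.contDiffOn (by fun_prop)).mul h2))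

noncomputable def pdB (f : ℝ × ℝ → ℝ) : ℝ × ℝ → ℝ := fun p => fderiv ℝ f p (0, 1)

noncomputable def GB (j : ℕ) : ℝ × ℝ → ℝ := pdB^[j] gB

lemma pdB_contDiffOn {f : ℝ × ℝ → ℝ} (hf : ContDiffOn ℝ (⊤ : ℕ∞) f UB) :
    ContDiffOn ℝ (⊤ : ℕ∞) (pdB f) UB :=
  (hf.fderiv_of_isOpen UB_open (mod_cast le_top)).clm_apply contDiffOn_const

lemma GB_contDiffOn (j : ℕ) : ContDiffOn ℝ (⊤ : ℕ∞) (GB j) UB := by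
  induction j with
  | zero => exact gB_contDiffOn
  | succ j ih =>
    rw [GB, Function.iterate_succ_apply']
    exact pdB_contDiffOn ih

lemma GB_slice (j : ℕ) : ∀ μ r : ℝ, r ≠ 0 →
    iteratedDeriv j (fun s => gB (μ, s)) r = GB j (μ, r) := by
  induction j with
  | zero => intro μ r _; simp [GB]
  | succ j ih =>
    intro μ r hr
    rw [iteratedDeriv_succ]
    have hev : iteratedDeriv j (fun s => gB (μ, s)) =ᶠ[nhds r] fun s => GB j (μ, s) := by
      filter_upwards [eventually_ne_nhds hr] with s hs
      exact ih μ s hs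
    rw [hev.deriv_eq]
    have hU : (μ, r) ∈ UB := hr
    have hdiff : DifferentiableAt ℝ (GB j) (μ, r) :=
      ((GB_contDiffOn j).contDiffAt (UB_open.mem_nhds hU)).differentiableAt (by simp)
    have hline : HasDerivAt (fun s : ℝ => ((μ, s) : ℝ × ℝ)) ((0 : ℝ), (1 : ℝ)) r :=
      HasDerivAt.prodMk (hasDerivAt_const r μ) (hasDerivAt_id r)
    have hcomp := hdiff.hasFDerivAt.comp_hasDerivAt r hline
    have hGB : GB (j + 1) = pdB (GB j) := by
      rw [GB, GB, Function.iterate_succ_apply']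
    rw [hGB]
    exact hcomp.deriv

lemma iteratedDeriv_const_mul' (j : ℕ) (c : ℝ) (f : ℝ → ℝ) :
    iteratedDeriv j (fun s => c * f s) = fun x => c * iteratedDeriv j f x := by
  induction j with
  | zero => simp [iteratedDeriv_zero]
  | succ j ih =>
    funext x
    rw [iteratedDeriv_succ, ih, iteratedDeriv_succ, deriv_const_mul_field]

lemma inner_pos {x : ℝ} (hx : 0 < x) : 0 < x ^ 2 - x ^ 4 + x ^ 6 := by
  nlinarith [sq_nonneg (x ^ 3 - x), pow_pos hx 4]

lemma numer_pos {lam x : ℝ} (hl : 0 < lam) (hx : 0 < x) :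
    0 < 2 * x ^ 1 * lam - 4 * x ^ 3 * lam + 6 * x ^ 5 * lam := by
  have h1 : 0 < 1 - 2 * x ^ 2 + 3 * x ^ 4 := by nlinarith [sq_nonneg (x ^ 2 - 1), pow_pos hx 4]
  nlinarith [mul_pos (mul_pos hx hl) h1]

lemma deriv_formula (lam s : ℝ) (hl : 0 < lam) (hs : 0 < s) :
    deriv (fun s' : ℝ => Real.sqrt ((lam * s') ^ 2 - (lam * s') ^ 4 + (lam * s') ^ 6)) s
      = (2 * (lam * s) ^ 1 * lam - 4 * (lam * s) ^ 3 * lam + 6 * (lam * s) ^ 5 * lam) /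
          (2 * Real.sqrt ((lam * s) ^ 2 - (lam * s) ^ 4 + (lam * s) ^ 6)) := by
  have L : HasDerivAt (fun s' : ℝ => lam * s') lam s := by
    simpa using (hasDerivAt_id s).const_mul lam
  have hinner : HasDerivAt (fun s' : ℝ => (lam * s') ^ 2 - (lam * s') ^ 4 + (lam * s') ^ 6)
      (2 * (lam * s) ^ 1 * lam - 4 * (lam * s) ^ 3 * lam + 6 * (lam * s) ^ 5 * lam) s := by
    have h := (((L.pow 2).sub (L.pow 4)).add (L.pow 6))
    exact h.congr_deriv (by norm_num)
  have hx : (lam * s) ^ 2 - (lam * s) ^ 4 + (lam * s) ^ 6 ≠ 0 :=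
    (inner_pos (mul_pos hl hs)).ne'
  exact (hinner.sqrt hx).deriv

lemma inv_formula (lam s : ℝ) (hl : 0 < lam) (hs : 0 < s) :
    ((2 * (lam * s) ^ 1 * lam - 4 * (lam * s) ^ 3 * lam + 6 * (lam * s) ^ 5 * lam) /
        (2 * Real.sqrt ((lam * s) ^ 2 - (lam * s) ^ 4 + (lam * s) ^ 6)))⁻¹
      = lam⁻¹ ^ 3 * gB (lam⁻¹, s) := by
  have hx : 0 < lam * s := mul_pos hl hs
  have hu : (lam⁻¹ : ℝ) ^ 2 * (s ^ 2)⁻¹ = (((lam * s) ^ 2)⁻¹ : ℝ) := by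
    field_simp
  have hsq : (lam * s) ^ 2 - (lam * s) ^ 4 + (lam * s) ^ 6
      = ((lam * s) ^ 3) ^ 2 *
        ((((lam * s) ^ 2)⁻¹) ^ 2 - ((lam * s) ^ 2)⁻¹ + 1) := by
    field_simp
  have hS : Real.sqrt ((lam * s) ^ 2 - (lam * s) ^ 4 + (lam * s) ^ 6)
      = (lam * s) ^ 3 *
        Real.sqrt ((((lam * s) ^ 2)⁻¹) ^ 2 - ((lam * s) ^ 2)⁻¹ + 1) := by
    rw [hsq, Real.sqrt_mul (sq_nonneg _), Real.sqrt_sq (by positivity)]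
  have hApos : 0 < Real.sqrt ((((lam * s) ^ 2)⁻¹) ^ 2 - ((lam * s) ^ 2)⁻¹ + 1) := by
    apply Real.sqrt_pos.2
    nlinarith [sq_nonneg (2 * ((lam * s) ^ 2)⁻¹ - 1)]
  have hdpos : (0 : ℝ) < (((lam * s) ^ 2)⁻¹) ^ 2 - 2 * ((lam * s) ^ 2)⁻¹ + 3 := by
    nlinarith [sq_nonneg (((lam * s) ^ 2)⁻¹ - 1)]
  have hN := numer_pos hl hx
  rw [gB, phiB]
  simp only [hu]
  rw [hS]
  generalize Real.sqrt ((((lam * s) ^ 2)⁻¹) ^ 2 - ((lam * s) ^ 2)⁻¹ + 1) = A at hApos ⊢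
  rw [inv_div]
  have hP : 0 < 1 - 2 * (lam * s) ^ 2 + 3 * (lam * s) ^ 4 := by
    nlinarith [sq_nonneg ((lam * s) ^ 2 - 1), pow_pos hx 4]
  have h1 : lam ^ 2 * s * 2 - lam ^ 4 * s ^ 3 * 4 + lam ^ 6 * s ^ 5 * 6 ≠ 0 := by
    have h := mul_pos (mul_pos (mul_pos two_pos (pow_pos hl 2)) hs) hP
    nlinarith [h]
  have h2 : lam ^ 5 * s ^ 4 - lam ^ 7 * s ^ 6 * 2 + lam ^ 9 * s ^ 8 * 3 ≠ 0 := by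
    have h := mul_pos (mul_pos (pow_pos hl 5) (pow_pos hs 4)) hP
    nlinarith [h]
  field_simp
  have hE : 0 < (lam * s) ^ 2 - ((lam * s) ^ 2) ^ 2 * 2 + 3 * (((lam * s) ^ 2) ^ 2 * (lam * s) ^ 2) := by
    nlinarith [mul_pos (pow_pos hx 2) hP]
  have hd1 : 0 < 2 * (lam * s) * lam - 4 * (lam * s) ^ 3 * lam + 6 * (lam * s) ^ 5 * lam := by
    nlinarith [hN]
  have hd2 : 0 < lam ^ 3 * (s ^ 2 * ((lam * s) ^ 2 - ((lam * s) ^ 2) ^ 2 * 2 +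
      3 * (((lam * s) ^ 2) ^ 2 * (lam * s) ^ 2))) :=
    mul_pos (pow_pos hl 3) (mul_pos (pow_pos hs 2) hE)
  rw [div_eq_div_iff (by nlinarith [hP]) (by nlinarith [hP])]
  ring

/-- Let `β = −1`, `m(r) = √(r² − r⁴ + r⁶)`, and for `λ > 0` set
`m_λ(r) = m(λr)`. There exist `λ₀ > 1` and, for every integer `j ≥ 0`, a constant `C_j > 0`
such that for all `λ ≥ λ₀` and all `r ∈ [1/2, 2]`, the function `r ↦ 1/m_λ′(r)` is well
defined (`m_λ′(r) ≠ 0`) and `|∂_r^j (1/m_λ′(r))| ≤ C_j λ⁻³`. -/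
theorem rescaled_phase_inverse_derivative_bounds :
    ∃ lam₀ > (1 : ℝ), ∀ j : ℕ, ∃ C > (0 : ℝ), ∀ lam : ℝ, lam₀ ≤ lam →
      ∀ r ∈ Set.Icc (1 / 2 : ℝ) 2,
        deriv (fun s : ℝ => Real.sqrt ((lam * s) ^ 2 - (lam * s) ^ 4 + (lam * s) ^ 6)) r ≠ 0 ∧
        |iteratedDeriv j
            (fun s : ℝ =>
              (deriv (fun s' : ℝ =>
                Real.sqrt ((lam * s') ^ 2 - (lam * s') ^ 4 + (lam * s') ^ 6)) s)⁻¹) r| ≤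
          C * lam ^ (-(3 : ℝ)) := by
  refine ⟨2, one_lt_two, fun j => ?_⟩
  have hK : IsCompact (Icc (0 : ℝ) (1 / 2) ×ˢ Icc (1 / 2 : ℝ) 2) :=
    isCompact_Icc.prod isCompact_Icc
  have hKU : (Icc (0 : ℝ) (1 / 2) ×ˢ Icc (1 / 2 : ℝ) 2) ⊆ UB := by
    rintro ⟨μ, r⟩ ⟨-, hr⟩
    have h1 : (1 / 2 : ℝ) ≤ r := hr.1
    simp only [UB, mem_setOf_eq]
    intro h0
    rw [h0] at h1
    norm_num at h1
  obtain ⟨C, hC⟩ := hK.exists_bound_of_continuousOn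
    (((GB_contDiffOn j).continuousOn).mono hKU)
  refine ⟨max C 1, lt_max_of_lt_right one_pos, fun lam hlam r hr => ?_⟩
  have hl0 : (0 : ℝ) < lam := by linarith
  have hrpos : (0 : ℝ) < r := by have := hr.1; linarith
  have hne : deriv (fun s : ℝ =>
      Real.sqrt ((lam * s) ^ 2 - (lam * s) ^ 4 + (lam * s) ^ 6)) r ≠ 0 := by
    rw [deriv_formula lam r hl0 hrpos]
    exact div_ne_zero (numer_pos hl0 (mul_pos hl0 hrpos)).ne'
      (mul_pos two_pos (Real.sqrt_pos.2 (inner_pos (mul_pos hl0 hrpos)))).ne'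
  refine ⟨hne, ?_⟩
  have hev : (fun s : ℝ =>
      (deriv (fun s' : ℝ =>
        Real.sqrt ((lam * s') ^ 2 - (lam * s') ^ 4 + (lam * s') ^ 6)) s)⁻¹)
      =ᶠ[nhds r] fun s => lam⁻¹ ^ 3 * gB (lam⁻¹, s) := by
    filter_upwards [eventually_gt_nhds hrpos] with s hs
    rw [deriv_formula lam s hl0 hs, inv_formula lam s hl0 hs]
  rw [hev.iteratedDeriv_eq j, iteratedDeriv_const_mul' j (lam⁻¹ ^ 3) (fun s => gB (lam⁻¹, s))]
  show |lam⁻¹ ^ 3 * iteratedDeriv j (fun s => gB (lam⁻¹, s)) r| ≤ max C 1 * lam ^ (-(3 : ℝ))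
  rw [GB_slice j lam⁻¹ r hrpos.ne']
  have hrpow : lam ^ (-(3 : ℝ)) = lam⁻¹ ^ 3 := by
    rw [Real.rpow_neg hl0.le, show (3 : ℝ) = ((3 : ℕ) : ℝ) by norm_num,
      Real.rpow_natCast, inv_pow]
  have hmem : ((lam⁻¹ : ℝ), r) ∈ Icc (0 : ℝ) (1 / 2) ×ˢ Icc (1 / 2 : ℝ) 2 := by
    constructor
    · constructor
      · positivity
      · rw [inv_le_comm₀ hl0 (by norm_num)]
        simpa using hlam
    · exact hr
  have hbound : |GB j (lam⁻¹, r)| ≤ max C 1 :=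
    le_trans (hC _ hmem) (le_max_left _ _)
  rw [hrpow, abs_mul, abs_of_nonneg (by positivity : (0:ℝ) ≤ lam⁻¹ ^ 3), mul_comm]
  exact mul_le_mul_of_nonneg_right hbound (by positivity)
end
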